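/- arXiv:1308.1929 — 3 statements merged into one kernel-verified Lean document; each statement's English description precedes it below -/
import Mathlib

section
/- Let Cl be the Clifford algebra over ℂ of the module ℂ⁴ with the quadratic form Q(x) = x_0² − x_1² − x_2² − x_3², let e_a := ι(u_a) for the standard basis vectors, and set γ_5 := i · e_0 e_1 e_2 e_3. For any function a : Fin 4 → Fin 4, define ε(a) ∈ ℤ to be the sign of a viewed as a permutation of {0,1,2,3} if a is bijective, and 0 otherwise (so ε(id) = 1, corresponding to ε_{0123} = 1). Then (1/24) Σ_{σ ∈ S_4} sgn(σ) · e_{a(σ(0))} e_{a(σ(1))} e_{a(σ(2))} e_{a(σ(3))} = −i · ε(a) · γ_5. -/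
open scoped BigOperators

noncomputable section

/-- The quadratic form `Q(x) = x₀² − x₁² − x₂² − x₃²` on `ℂ⁴`
(mostly-minus Minkowski signature `η = diag(1,−1,−1,−1)`). -/
def minkowskiQ : QuadraticForm ℂ (Fin 4 → ℂ) :=
  QuadraticMap.weightedSumSquares ℂ (![1, -1, -1, -1] : Fin 4 → ℂ)

/-- The gamma "matrices" `γ_a = ι(u_a)` in the Clifford algebra of `minkowskiQ`. -/
def gamma (a : Fin 4) : CliffordAlgebra minkowskiQ :=
  CliffordAlgebra.ι minkowskiQ (Pi.single a 1)

/-- The chirality element `γ₅ = i γ₀ γ₁ γ₂ γ₃`. -/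
def gammaFive : CliffordAlgebra minkowskiQ :=
  Complex.I • (gamma 0 * gamma 1 * gamma 2 * gamma 3)

/-- The 4-dimensional epsilon-tensor `ε(a)`: the sign of `a` viewed as a permutation of
`{0,1,2,3}` if `a` is bijective, and `0` otherwise (so `ε(id) = 1`, i.e. `ε_{0123} = 1`). -/
def eps4 (a : Fin 4 → Fin 4) : ℤ :=
  if h : Function.Bijective a then Equiv.Perm.sign (Equiv.ofBijective a h) else 0

/-! The antisymmetrized sum is the alternatization of the multilinear map
`v ↦ ι v₀ * ι v₁ * ι v₂ * ι v₃`, evaluated at `(u_{a 0}, …, u_{a 3})`. An alternating map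
vanishes on non-injective families and transforms by `sgn a` under a permutation `a`, so
everything reduces to its value at the standard basis. The basis vectors are `Q`-orthogonal,
hence their images anticommute and each of the `4!` terms of that value equals `γ₀γ₁γ₂γ₃`.
Finally `(-i) · i = 1`. -/

section Anticommute

variable {R : Type*} [Ring R]

theorem List.prod_ofFn_comp_swap_castSucc_succ {n : ℕ} (x : Fin (n + 1) → R) (i : Fin n)
    (hx : x i.castSucc * x i.succ = -(x i.succ * x i.castSucc)) :
    (List.ofFn (x ∘ Equiv.swap i.castSucc i.succ)).prod = -(List.ofFn x).prod := by
  induction n with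
  | zero => exact i.elim0
  | succ n ih =>
    cases i using Fin.cases with
    | zero =>
      have hfix (k : Fin n) : Equiv.swap (0 : Fin (n + 2)) 1 k.succ.succ = k.succ.succ :=
        Equiv.swap_apply_of_ne_of_ne (Fin.succ_ne_zero _) (Fin.succ_succ_ne_one _)
      simp only [Fin.castSucc_zero, Fin.succ_zero_eq_one] at hx
      simp only [List.ofFn_succ, Function.comp_apply, List.prod_cons, Fin.castSucc_zero,
        Fin.succ_zero_eq_one, Equiv.swap_apply_left, Equiv.swap_apply_right, hfix]
      rw [← mul_assoc, ← mul_assoc, hx, neg_mul, neg_neg]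
    | succ j =>
      rw [← Fin.succ_castSucc] at hx ⊢
      have hsucc (k : Fin (n + 1)) : Equiv.swap j.castSucc.succ j.succ.succ k.succ =
          (Equiv.swap j.castSucc j.succ k).succ :=
        (Fin.succ_injective _).swap_apply _ _ _
      rw [List.ofFn_succ, List.ofFn_succ (f := x), List.prod_cons, List.prod_cons]
      simp only [Function.comp_apply, hsucc,
        Equiv.swap_apply_of_ne_of_ne (Fin.succ_ne_zero _).symm (Fin.succ_ne_zero _).symm]
      rw [← mul_neg]
      congr 1
      exact ih (x ∘ Fin.succ) j hx

theorem List.prod_ofFn_comp_perm_of_anticommute {n : ℕ} {x : Fin n → R}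
    (hx : _root_.Pairwise fun i j => x i * x j = -(x j * x i)) (σ : Equiv.Perm (Fin n)) :
    (List.ofFn (x ∘ σ)).prod = Equiv.Perm.sign σ • (List.ofFn x).prod := by
  cases n with
  | zero => simp [Subsingleton.elim σ 1]
  | succ n =>
    have hσ : σ ∈ Submonoid.closure _ :=
      Equiv.Perm.mclosure_swap_castSucc_succ n ▸ Submonoid.mem_top σ
    induction hσ using Submonoid.closure_induction generalizing x with
    | one => simp
    | mem _ hτ =>
      obtain ⟨i, rfl⟩ := hτ
      rw [List.prod_ofFn_comp_swap_castSucc_succ x i (hx (Fin.castSucc_lt_succ (i := i)).ne),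
        Equiv.Perm.sign_swap (Fin.castSucc_lt_succ (i := i)).ne, Units.neg_smul, one_smul]
    | mul σ τ _ _ hσ hτ =>
      have hxσ :
          _root_.Pairwise fun i j => (x ∘ σ) i * (x ∘ σ) j = -((x ∘ σ) j * (x ∘ σ) i) :=
        fun i j hij => hx (σ.injective.ne hij)
      rw [Equiv.Perm.coe_mul, ← Function.comp_assoc, hτ hxσ, hσ hx, smul_smul, mul_comm,
        Equiv.Perm.sign_mul]

end Anticommute

theorem QuadraticMap.isOrtho_weightedSumSquares_single {ι R : Type*} [Fintype ι] [DecidableEq ι]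
    [CommSemiring R] (w : ι → R) {i j : ι} (hij : i ≠ j) (r s : R) :
    (weightedSumSquares R w).IsOrtho (Pi.single i r) (Pi.single j s) := by
  rw [isOrtho_def]
  simp only [weightedSumSquares_apply, ← Finset.sum_add_distrib, ← smul_add]
  refine Finset.sum_congr rfl fun k _ => ?_
  rcases eq_or_ne k i with rfl | hki
  · simp [hij]
  · simp [hki]

namespace CliffordAlgebra

variable {R M : Type*} [CommRing R] [AddCommGroup M] [Module R M] (Q : QuadraticForm R M)

def ιMultilinear (n : ℕ) : MultilinearMap R (fun _ : Fin n => M) (CliffordAlgebra Q) :=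
  (MultilinearMap.mkPiAlgebraFin R n (CliffordAlgebra Q)).compLinearMap fun _ => ι Q

variable {Q}

theorem ιMultilinear_apply {n : ℕ} (v : Fin n → M) :
    ιMultilinear Q n v = (List.ofFn fun i => ι Q (v i)).prod :=
  MultilinearMap.mkPiAlgebraFin_apply (R := R) _

theorem alternatization_ιMultilinear_of_isOrtho {n : ℕ} {v : Fin n → M}
    (hv : Pairwise fun i j => Q.IsOrtho (v i) (v j)) :
    MultilinearMap.alternatization (ιMultilinear Q n) v = n.factorial • ιMultilinear Q n v := by
  have hanti : Pairwise fun i j => ι Q (v i) * ι Q (v j) = -(ι Q (v j) * ι Q (v i)) :=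
    fun i j hij => ι_mul_ι_comm_of_isOrtho (hv hij)
  have hterm (σ : Equiv.Perm (Fin n)) :
      Equiv.Perm.sign σ • ιMultilinear Q n (fun i => v (σ i)) = ιMultilinear Q n v := by
    rw [ιMultilinear_apply, ιMultilinear_apply,
      show (fun i => ι Q (v (σ i))) = (fun i => ι Q (v i)) ∘ σ from rfl,
      List.prod_ofFn_comp_perm_of_anticommute hanti, smul_smul, Int.units_mul_self, one_smul]
  simp only [MultilinearMap.alternatization_apply, MultilinearMap.domDomCongr_apply]
  rw [Finset.sum_congr rfl fun σ _ => hterm σ, Finset.sum_const, Finset.card_univ,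
    Fintype.card_perm, Fintype.card_fin]

end CliffordAlgebra

open CliffordAlgebra

theorem ιMultilinear_minkowskiQ_single (b : Fin 4 → Fin 4) :
    ιMultilinear minkowskiQ 4 (fun k => Pi.single (b k) 1) =
      gamma (b 0) * gamma (b 1) * gamma (b 2) * gamma (b 3) := by
  simp [ιMultilinear_apply, List.ofFn_succ, gamma, mul_assoc]

/-- The gamma-matrix identity `γ_{[a} γ_b γ_c γ_{d]} = −i γ₅ ε_{abcd}` in the
4-dimensional Clifford algebra with quadratic form `x₀² − x₁² − x₂² − x₃²`, where square
brackets denote antisymmetrization with weight `1/4!` over all permutations. -/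
theorem antisymmetrized_gamma_eq_gammaFive (a : Fin 4 → Fin 4) :
    (24 : ℂ)⁻¹ • ∑ σ : Equiv.Perm (Fin 4),
        ((Equiv.Perm.sign σ : ℤ) : ℂ) •
          (gamma (a (σ 0)) * gamma (a (σ 1)) * gamma (a (σ 2)) * gamma (a (σ 3))) =
      (-Complex.I * ((eps4 a : ℤ) : ℂ)) • gammaFive := by
  set e : Fin 4 → Fin 4 → ℂ := fun k => Pi.single k 1
  have hsum : ∑ σ : Equiv.Perm (Fin 4), ((Equiv.Perm.sign σ : ℤ) : ℂ) •
      (gamma (a (σ 0)) * gamma (a (σ 1)) * gamma (a (σ 2)) * gamma (a (σ 3))) =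
      MultilinearMap.alternatization (ιMultilinear minkowskiQ 4) (e ∘ a) := by
    simp only [MultilinearMap.alternatization_apply, MultilinearMap.domDomCongr_apply,
      Units.smul_def, Int.cast_smul_eq_zsmul, Function.comp_apply, e,
      ιMultilinear_minkowskiQ_single]
  have hortho : Pairwise fun i j => minkowskiQ.IsOrtho (e i) (e j) :=
    fun i j hij => QuadraticMap.isOrtho_weightedSumSquares_single _ hij 1 1
  rw [hsum]
  by_cases ha : Function.Bijective a
  · have hbasis : MultilinearMap.alternatization (ιMultilinear minkowskiQ 4) e =
        (24 : ℂ) • (gamma 0 * gamma 1 * gamma 2 * gamma 3) := by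
      rw [alternatization_ιMultilinear_of_isOrtho hortho, ← Nat.cast_smul_eq_nsmul ℂ]
      exact congrArg₂ (· • ·) (by norm_num [Nat.factorial]) (ιMultilinear_minkowskiQ_single id)
    rw [show e ∘ a = e ∘ Equiv.ofBijective a ha from rfl, AlternatingMap.map_perm, hbasis,
      eps4, dif_pos ha, gammaFive, Units.smul_def, ← Int.cast_smul_eq_zsmul ℂ]
    simp only [smul_smul]
    congr 1
    linear_combination ((Equiv.Perm.sign (Equiv.ofBijective a ha) : ℤ) : ℂ) * Complex.I_sq
  · have hna : ¬ Function.Injective (e ∘ a) := fun h =>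
      ha (Finite.injective_iff_bijective.mp h.of_comp)
    rw [AlternatingMap.map_eq_zero_of_not_injective _ _ hna, eps4, dif_neg ha]
    simp
end
end

section
/- Let λ, E ∈ ℝ, k ∈ ℝ³, and χ ∈ ℂ⁴ with χ ≠ 0, and define the plane wave ψ : ℝ × ℝ³ → ℂ⁴ by ψ(t, x) = e^{i(Et + ⟨k, x⟩)} χ. Then for every point p = (t, x), the series Σ_{n≥0} ((iλ)^n / n!) (∂_t^n Δψ)(p) converges absolutely with sum e^{−λE} (Δψ)(p) = −|k|² e^{−λE} ψ(p), where Δ = ∂_1² + ∂_2² + ∂_3² is the spatial Laplacian. Moreover, ψ satisfies the deformed wave equation (∂_t² ψ)(p) = Σ_{n≥0} ((iλ)^n / n!) (∂_t^n Δψ)(p) for all p if and only if E² e^{λE} = |k|². -/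
open scoped BigOperators

noncomputable section

/-- Spacetime points `(t, x)` with `t ∈ ℝ` and `x ∈ ℝ³`. -/
abbrev SpacetimePt : Type := ℝ × (Fin 3 → ℝ)

/-- Spinor-valued fields on spacetime. -/
abbrev SpinorField : Type := SpacetimePt → (Fin 4 → ℂ)

/-- The time derivative `∂_t`. -/
def dT (f : SpinorField) : SpinorField :=
  fun p => deriv (fun s => f (s, p.2)) p.1

/-- The spatial partial derivative `∂_j`, `j = 1, 2, 3`. -/
def dSp (j : Fin 3) (f : SpinorField) : SpinorField :=
  fun p => deriv (fun s => f (p.1, Function.update p.2 j s)) (p.2 j)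

/-- The spatial Laplacian `Δ = ∂₁² + ∂₂² + ∂₃²`. -/
def spatialLap (f : SpinorField) : SpinorField :=
  fun p => ∑ j : Fin 3, dSp j (dSp j f) p

/-- The plane wave `ψ(t, x) = e^{i(Et + ⟨k, x⟩)} χ`. -/
def planeWave (E : ℝ) (k : Fin 3 → ℝ) (χ : Fin 4 → ℂ) : SpinorField :=
  fun p => Complex.exp (Complex.I * ((E : ℂ) * (p.1 : ℂ) + ∑ j, (k j : ℂ) * (p.2 j : ℂ))) • χ

/-! Plane waves are joint eigenfunctions of `∂_t` and the `∂_j`, with eigenvalues `iE` and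
`i k_j`. Hence `∂_tⁿ Δψ = (iE)ⁿ (-|k|²) ψ`, the deformation series is the exponential series
at `(iλ)(iE) = -λE`, and the deformed wave equation reduces to the scalar identity
`-E² = -e^{-λE} |k|²` between the coefficients of the nowhere-vanishing field `ψ`. -/

open Complex

def phase (E : ℝ) (k : Fin 3 → ℝ) (p : SpacetimePt) : ℝ :=
  E * p.1 + ∑ j, k j * p.2 j

section PlaneWave

variable (E : ℝ) (k : Fin 3 → ℝ)

lemma planeWave_eq_exp_phase (χ : Fin 4 → ℂ) (p : SpacetimePt) :
    planeWave E k χ p = cexp (I * phase E k p) • χ := by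
  simp only [planeWave, phase]
  push_cast
  rfl

lemma planeWave_smul (c : ℂ) (χ : Fin 4 → ℂ) :
    planeWave E k (c • χ) = c • planeWave E k χ := by
  funext p
  exact smul_comm _ c χ

lemma sum_planeWave {ι : Type*} (s : Finset ι) (χ : ι → Fin 4 → ℂ) (p : SpacetimePt) :
    ∑ i ∈ s, planeWave E k (χ i) p = planeWave E k (∑ i ∈ s, χ i) p :=
  (Finset.smul_sum ..).symm

lemma planeWave_apply_ne_zero {χ : Fin 4 → ℂ} (hχ : χ ≠ 0) (p : SpacetimePt) :
    planeWave E k χ p ≠ 0 :=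
  smul_ne_zero (exp_ne_zero _) hχ

lemma hasDerivAt_phase_time (x : Fin 3 → ℝ) (t : ℝ) :
    HasDerivAt (fun s => phase E k (s, x)) E t := by
  simpa only [phase, mul_one] using ((hasDerivAt_id' t).const_mul E).add_const _

lemma hasDerivAt_phase_space (p : SpacetimePt) (j : Fin 3) :
    HasDerivAt (fun s => phase E k (p.1, Function.update p.2 j s)) (k j) (p.2 j) := by
  have hcoord (m : Fin 3) := hasDerivAt_pi.mp (hasDerivAt_update p.2 j (p.2 j)) m
  have hsum := HasDerivAt.sum (u := Finset.univ) fun m _ => (hcoord m).const_mul (k m)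
  simpa [phase, Pi.single_apply] using hsum.const_add (E * p.1)

lemma hasDerivAt_planeWave_comp (χ : Fin 4 → ℂ) {γ : ℝ → SpacetimePt} {a s₀ : ℝ}
    (h : HasDerivAt (fun s => phase E k (γ s)) a s₀) :
    HasDerivAt (fun s => planeWave E k χ (γ s)) (planeWave E k ((I * a) • χ) (γ s₀)) s₀ := by
  simp only [planeWave_eq_exp_phase, smul_smul]
  simpa only [mul_comm] using (h.ofReal_comp.const_mul I).cexp.smul_const χ

lemma dT_planeWave (χ : Fin 4 → ℂ) : dT (planeWave E k χ) = planeWave E k ((I * E) • χ) :=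
  funext fun p => (hasDerivAt_planeWave_comp E k χ (hasDerivAt_phase_time E k p.2 p.1)).deriv

lemma dSp_planeWave (j : Fin 3) (χ : Fin 4 → ℂ) :
    dSp j (planeWave E k χ) = planeWave E k ((I * k j) • χ) := by
  funext p
  unfold dSp
  simpa using (hasDerivAt_planeWave_comp E k χ (hasDerivAt_phase_space E k p j)).deriv

lemma iterate_dT_planeWave (n : ℕ) (χ : Fin 4 → ℂ) :
    dT^[n] (planeWave E k χ) = (I * E) ^ n • planeWave E k χ := by
  induction n with
  | zero => simp
  | succ n ih =>
    rw [Function.iterate_succ_apply', ih, ← planeWave_smul, dT_planeWave, smul_smul, pow_succ',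
      planeWave_smul]

lemma spatialLap_planeWave (χ : Fin 4 → ℂ) :
    spatialLap (planeWave E k χ) = ((-(∑ j, k j ^ 2) : ℝ) : ℂ) • planeWave E k χ := by
  funext p
  have hsq (j : Fin 3) : (I * k j) * (I * k j) = -((k j : ℂ) ^ 2) := by
    linear_combination (k j : ℂ) ^ 2 * I_sq
  simp only [spatialLap, dSp_planeWave, smul_smul, sum_planeWave, ← Finset.sum_smul, hsq,
    ← planeWave_smul]
  push_cast
  rw [Finset.sum_neg_distrib]

end PlaneWave

lemma hasSum_pow_div_factorial_smul {V : Type*} [NormedAddCommGroup V] [NormedSpace ℂ V]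
    (z : ℂ) (v : V) : HasSum (fun n => (z ^ n / n.factorial) • v) (cexp z • v) := by
  rw [exp_eq_exp_ℂ]
  exact (NormedSpace.expSeries_div_hasSum_exp z).smul_const v

lemma summable_norm_pow_div_factorial_smul {V : Type*} [NormedAddCommGroup V] [NormedSpace ℂ V]
    (z : ℂ) (v : V) : Summable fun n => ‖(z ^ n / n.factorial) • v‖ := by
  simpa [norm_smul] using (Real.summable_pow_div_factorial ‖z‖).mul_right ‖v‖

lemma forall_smul_eq_smul_iff {α M : Type*} [AddCommGroup M] [Module ℂ M]
    [Module.IsTorsionFree ℂ M] {f : α → M} (hf : ∀ p, f p ≠ 0) [Nonempty α] {a b : ℂ} :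
    (∀ p, a • f p = b • f p) ↔ a = b :=
  ⟨fun h => smul_left_injective ℂ (hf (Classical.arbitrary α)) (h _), fun h _ => h ▸ rfl⟩

/-- For the plane wave `ψ = e^{i(Et + ⟨k,x⟩)} χ` with `χ ≠ 0`, the series
`Σₙ ((iλ)ⁿ/n!) (∂_tⁿ Δψ)(p)` converges absolutely with sum
`e^{−λE} (Δψ)(p) = −|k|² e^{−λE} ψ(p)`, and `ψ` solves the deformed wave equation
`∂_t²ψ = Σₙ ((iλ)ⁿ/n!) ∂_tⁿ Δψ` if and only if the deformed dispersion relation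
`E² e^{λE} = |k|²` holds. -/
theorem kappa_minkowski_dispersion (lam E : ℝ) (k : Fin 3 → ℝ) (χ : Fin 4 → ℂ) (hχ : χ ≠ 0) :
    (∀ p : SpacetimePt,
      Summable (fun n : ℕ =>
        ‖((Complex.I * (lam : ℂ)) ^ n / (n.factorial : ℂ)) •
          dT^[n] (spatialLap (planeWave E k χ)) p‖) ∧
      HasSum (fun n : ℕ =>
          ((Complex.I * (lam : ℂ)) ^ n / (n.factorial : ℂ)) •
            dT^[n] (spatialLap (planeWave E k χ)) p)
        (((Real.exp (-(lam * E)) : ℝ) : ℂ) • spatialLap (planeWave E k χ) p) ∧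
      spatialLap (planeWave E k χ) p =
        ((-(∑ j, (k j) ^ 2) : ℝ) : ℂ) • planeWave E k χ p) ∧
    ((∀ p : SpacetimePt,
        dT (dT (planeWave E k χ)) p =
          ∑' n : ℕ, ((Complex.I * (lam : ℂ)) ^ n / (n.factorial : ℂ)) •
            dT^[n] (spatialLap (planeWave E k χ)) p) ↔
      E ^ 2 * Real.exp (lam * E) = ∑ j, (k j) ^ 2) := by
  set K : ℝ := ∑ j, k j ^ 2
  have hΔ : spatialLap (planeWave E k χ) = planeWave E k (((-K : ℝ) : ℂ) • χ) := by
    rw [spatialLap_planeWave, planeWave_smul]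
  have hterm (n : ℕ) (p : SpacetimePt) :
      ((I * lam) ^ n / n.factorial) • dT^[n] (spatialLap (planeWave E k χ)) p =
        (((-(lam * E) : ℝ) : ℂ) ^ n / n.factorial) • spatialLap (planeWave E k χ) p := by
    rw [hΔ, iterate_dT_planeWave, Pi.smul_apply, smul_smul, div_mul_eq_mul_div, ← mul_pow]
    congr 3
    push_cast
    linear_combination (lam * E : ℂ) * I_sq
  have hsum (p : SpacetimePt) := hasSum_pow_div_factorial_smul (((-(lam * E) : ℝ) : ℂ))
    (spatialLap (planeWave E k χ) p)
  simp only [← hterm, ← ofReal_exp] at hsum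
  refine ⟨fun p => ⟨?_, hsum p, congrFun (spatialLap_planeWave E k χ) p⟩, ?_⟩
  · simpa only [hterm] using summable_norm_pow_div_factorial_smul _ _
  have hdT2 : dT (dT (planeWave E k χ)) = ((-(E ^ 2) : ℝ) : ℂ) • planeWave E k χ := by
    rw [dT_planeWave, dT_planeWave, smul_smul, planeWave_smul]
    congr 1
    push_cast
    linear_combination (E : ℂ) ^ 2 * I_sq
  simp only [(hsum _).tsum_eq]
  simp only [hdT2, spatialLap_planeWave, Pi.smul_apply, smul_smul,
    forall_smul_eq_smul_iff (planeWave_apply_ne_zero E k hχ)]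
  rw [← ofReal_mul, ofReal_inj, Real.exp_neg]
  constructor <;> intro h <;> field_simp at h ⊢ <;> linarith
end
end

section
/- Let γ⁰, γ³ ∈ M₄(ℂ) satisfy (γ⁰)² = 1, (γ³)² = −1, and γ⁰γ³ + γ³γ⁰ = 0. Let λ, E, k ∈ ℝ with E > 0 and E² e^{λE} = k². Then k ≠ 0, and for every χ ∈ ℂ⁴ one has (E γ⁰ + k e^{−λE/2} γ³) χ = 0 if and only if (γ⁰ + sgn(k) γ³) χ = 0. In particular, the space of solutions of the polarization equation is independent of the deformation parameter λ. -/
/-!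
On shell `|k| = E e^{λE/2}`, so the deformed coefficient `k e^{−λE/2}` of `γ³` is exactly
`E sgn(k)`. The deformed polarization matrix is therefore `E (γ⁰ + sgn(k) γ³)`, and since
`E ≠ 0` it has the same kernel as the undeformed one.
-/

theorem Real.abs_mul_sign (r : ℝ) : |r| * Real.sign r = r := by
  rcases lt_trichotomy r 0 with hr | rfl | hr
  · rw [abs_of_neg hr, Real.sign_of_neg hr]; ring
  · simp
  · rw [abs_of_pos hr, Real.sign_of_pos hr, mul_one]

theorem Real.exp_half_sq (x : ℝ) : Real.exp (x / 2) ^ 2 = Real.exp x := by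
  rw [sq, ← Real.exp_add, add_halves]

theorem abs_eq_mul_exp_half_of_sq_mul_exp_eq_sq {E k x : ℝ} (hE : 0 ≤ E)
    (hshell : E ^ 2 * Real.exp x = k ^ 2) : |k| = E * Real.exp (x / 2) := by
  have hsq : k ^ 2 = (E * Real.exp (x / 2)) ^ 2 := by
    rw [mul_pow, Real.exp_half_sq, hshell]
  rw [(sq_eq_sq_iff_abs_eq_abs _ _).1 hsq, abs_of_nonneg (by positivity)]

theorem mul_exp_neg_half_eq_mul_sign_of_sq_mul_exp_eq_sq {E k x : ℝ} (hE : 0 ≤ E)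
    (hshell : E ^ 2 * Real.exp x = k ^ 2) :
    k * Real.exp (-x / 2) = E * Real.sign k := by
  have hcancel : Real.exp (x / 2) * Real.exp (-x / 2) = 1 := by
    rw [← Real.exp_add, neg_div, add_neg_cancel, Real.exp_zero]
  calc k * Real.exp (-x / 2) = |k| * Real.sign k * Real.exp (-x / 2) := by
        rw [Real.abs_mul_sign]
    _ = E * Real.sign k * (Real.exp (x / 2) * Real.exp (-x / 2)) := by
        rw [abs_eq_mul_exp_half_of_sq_mul_exp_eq_sq hE hshell]; ring
    _ = E * Real.sign k := by rw [hcancel, mul_one]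

theorem Matrix.smul_add_mul_smul_mulVec_eq_zero_iff {m n R : Type*} [Fintype n] [CommRing R]
    [NoZeroDivisors R] {c : R} (hc : c ≠ 0) (s : R) (A B : Matrix m n R) (v : n → R) :
    (c • A + (c * s) • B).mulVec v = 0 ↔ (A + s • B).mulVec v = 0 := by
  rw [mul_smul, ← smul_add, Matrix.smul_mulVec, smul_eq_zero, or_iff_right hc]

theorem kappa_minkowski_polarization_undeformed_general
    (γ₀ γ₃ : Matrix (Fin 4) (Fin 4) ℂ)
    (lam E k : ℝ) (hE : 0 < E)
    (hshell : E ^ 2 * Real.exp (lam * E) = k ^ 2) :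
    k ≠ 0 ∧
      ∀ χ : Fin 4 → ℂ,
        (((E : ℂ) • γ₀ + ((k * Real.exp (-(lam * E) / 2) : ℝ) : ℂ) • γ₃).mulVec χ = 0 ↔
          (γ₀ + ((Real.sign k : ℝ) : ℂ) • γ₃).mulVec χ = 0) := by
  have hk : k ≠ 0 := by
    rw [← abs_pos, abs_eq_mul_exp_half_of_sq_mul_exp_eq_sq hE.le hshell]
    positivity
  refine ⟨hk, fun χ => ?_⟩
  rw [mul_exp_neg_half_eq_mul_sign_of_sq_mul_exp_eq_sq hE.le hshell, Complex.ofReal_mul]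
  exact Matrix.smul_add_mul_smul_mulVec_eq_zero_iff (by exact_mod_cast hE.ne') _ _ _ _

/-- Let `γ⁰, γ³ ∈ M₄(ℂ)` with `(γ⁰)² = 1`, `(γ³)² = −1` and
`γ⁰γ³ + γ³γ⁰ = 0`, and let `λ, E, k ∈ ℝ` satisfy `E > 0` and the deformed on-shell condition
`E² e^{λE} = k²`.  Then `k ≠ 0` and, for every polarization spinor `χ ∈ ℂ⁴`, the deformed
polarization equation `(E γ⁰ + k e^{−λE/2} γ³) χ = 0` is equivalent to the undeformed one
`(γ⁰ + sgn(k) γ³) χ = 0`; in particular the space of physical spin polarizations is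
independent of the deformation parameter `λ`. -/
theorem kappa_minkowski_polarization_undeformed
    (γ₀ γ₃ : Matrix (Fin 4) (Fin 4) ℂ)
    (hγ₀ : γ₀ * γ₀ = 1) (hγ₃ : γ₃ * γ₃ = -1)
    (hanti : γ₀ * γ₃ + γ₃ * γ₀ = 0)
    (lam E k : ℝ) (hE : 0 < E)
    (hshell : E ^ 2 * Real.exp (lam * E) = k ^ 2) :
    k ≠ 0 ∧
      ∀ χ : Fin 4 → ℂ,
        (((E : ℂ) • γ₀ + ((k * Real.exp (-(lam * E) / 2) : ℝ) : ℂ) • γ₃).mulVec χ = 0 ↔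
          (γ₀ + ((Real.sign k : ℝ) : ℂ) • γ₃).mulVec χ = 0) :=
  kappa_minkowski_polarization_undeformed_general γ₀ γ₃ lam E k hE hshell
end
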